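/- In the witness model for excess ignorance under eliminative update, after announcing p the agent becomes ignorant of every tautology: in the updated single-world model M₁|p, the formula I⊤ is true at w₀, where ⊤ is any formula true at every world of every model, even though ¬I⊤ was true at w₀ in M₁. -/

import Mathlib

/-! Since `⊤` is true at every world, `I⊤` holds at `w` exactly when `w` sees no world other
than itself. In `M₁` the world `w₀` sees `w₁`; in `M₁|p` it is the only world left. -/

/-- Three truth values of strong Kleene logic: `f` (0), `n` (∅), `t` (1). -/
inductive TV where
  | f : TV
  | n : TV
  | t : TV
deriving DecidableEq

/-- Kleene negation: swaps 1 and 0, fixes ∅. -/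
def TV.neg : TV → TV
  | .t => .f
  | .n => .n
  | .f => .t

/-- Kleene conjunction: minimum under 0 < ∅ < 1. -/
def TV.and : TV → TV → TV
  | .t, b => b
  | .n, .t => .n
  | .n, b => b
  | .f, _ => .f

/-- Kleene disjunction: maximum under 0 < ∅ < 1. -/
def TV.or : TV → TV → TV
  | .f, b => b
  | .n, .f => .n
  | .n, b => b
  | .t, _ => .t

/-- Two-valued implication: value 1 unless the antecedent is 1 and the consequent is not. -/
def TV.imp : TV → TV → TV
  | .t, .t => .t
  | .t, _ => .f
  | _, _ => .t

/-- Modal formulas of LEI: atoms, ¬, ∧, ∨, → and the ignorance operator I. -/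
inductive MForm where
  | atom : ℕ → MForm
  | neg : MForm → MForm
  | conj : MForm → MForm → MForm
  | disj : MForm → MForm → MForm
  | impl : MForm → MForm → MForm
  | ig : MForm → MForm

/-- A LEI-model: a Kripke frame with a three-valued atomic valuation. -/
structure LEIModel (W : Type) where
  R : W → W → Prop
  V : ℕ → W → TV

open Classical in
/-- Three-valued evaluation in a LEI-model: strong Kleene clauses for ¬, ∧, ∨,
two-valued implication, and `I φ` is `t` at `w` iff `φ` is `t` at `w` and `φ` is not `t`
at any accessible world distinct from `w`; otherwise `I φ` is `f`. -/
noncomputable def val {W : Type} (M : LEIModel W) : MForm → W → TV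
  | .atom k, w => M.V k w
  | .neg φ, w => (val M φ w).neg
  | .conj φ ψ, w => (val M φ w).and (val M ψ w)
  | .disj φ ψ, w => (val M φ w).or (val M ψ w)
  | .impl φ ψ, w => (val M φ w).imp (val M ψ w)
  | .ig φ, w =>
      if val M φ w = TV.t ∧ ∀ w', w' ≠ w → M.R w w' → val M φ w' ≠ TV.t then TV.t
      else TV.f

/-- The standard eliminative public announcement update: restrict to the worlds where φ
is true, restricting the accessibility relation and the valuation accordingly. -/
noncomputable def elimUpdate {W : Type} (M : LEIModel W) (φ : MForm) :
    LEIModel {w : W // val M φ w = TV.t} where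
  R a b := M.R a.1 b.1
  V k w := M.V k w.1

/-- The witness model M₁: W = {w₀,w₁,w₂}, R = {(w₀,w₁),(w₀,w₂)}, v(p)={w₀}, v(¬p)={w₁}
(p is undefined at w₂). -/
def M1 : LEIModel (Fin 3) where
  R a b := a = 0 ∧ (b = 1 ∨ b = 2)
  V k w := if k = 0 then (if w = 0 then TV.t else if w = 1 then TV.f else TV.n) else TV.n

/-- ⊤ := p → p, true at every world of every model under the two-valued implication. -/
def top : MForm := .impl (.atom 0) (.atom 0)

theorem TV.imp_self (a : TV) : a.imp a = .t := by
  cases a <;> rfl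

theorem val_top {W : Type} (M : LEIModel W) (w : W) : val M top w = .t :=
  TV.imp_self _

theorem val_neg_ig_eq_t_iff {W : Type} (M : LEIModel W) (φ : MForm) (w : W) :
    val M (.neg (.ig φ)) w = .t ↔ val M (.ig φ) w ≠ .t := by
  simp only [val]
  split_ifs <;> simp [TV.neg]

theorem val_ig_top_eq_t_iff {W : Type} (M : LEIModel W) (w : W) :
    val M (.ig top) w = .t ↔ ∀ w', w' ≠ w → ¬ M.R w w' := by
  rw [val]
  split_ifs <;> simp_all [val_top]

theorem val_M1_atom_zero_eq_t_iff (w : Fin 3) : val M1 (.atom 0) w = .t ↔ w = 0 := by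
  fin_cases w <;> simp [val, M1]

instance : Subsingleton {w : Fin 3 // val M1 (.atom 0) w = .t} :=
  ⟨fun a b => Subtype.ext <| by
    rw [(val_M1_atom_zero_eq_t_iff a).1 a.2, (val_M1_atom_zero_eq_t_iff b).1 b.2]⟩

/-- After eliminatively announcing p in M₁, the agent becomes ignorant of the tautology
⊤ = (p → p) at w₀, although ¬I⊤ was true at w₀ in M₁. -/
theorem stmt14 (h : val M1 (.atom 0) (0 : Fin 3) = TV.t) :
    val M1 (.neg (.ig top)) (0 : Fin 3) = TV.t ∧
      val (elimUpdate M1 (.atom 0)) (.ig top) ⟨(0 : Fin 3), h⟩ = TV.t := by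
  constructor
  · rw [val_neg_ig_eq_t_iff, ne_eq, val_ig_top_eq_t_iff]
    simp only [not_forall, not_not]
    exact ⟨1, by decide, by simp [M1]⟩
  · rw [val_ig_top_eq_t_iff]
    intro w' hne
    exact absurd (Subsingleton.elim _ _) hne
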